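/- Let (ψ_n) be a sequence of nonnegative convex functions on ℝ^d and let {I^B(x)}_{x∈ℝ^d} be defined by I^B(x) = ri I^b(x) as in the Bass paving construction. If x₁ ∈ I^B(x) then I^B(x) = I^B(x₁); consequently, for x₁ ∉ I^B(x) the sets I^B(x) and I^B(x₁) are disjoint. Hence {I^B(x)} is a paving of ℝ^d into disjoint relatively open convex sets. -/

import Mathlib

open MeasureTheory Set

noncomputable section


variable {d : ℕ}

/-- The representatives of `ψ_n` that are nonnegative and take a value `< ε` at `x`:
all functions of the form `ψ_n + aff` with `aff` affine, `ψ_n + aff ≥ 0` and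
`(ψ_n + aff)(x) < ε`. -/
def reps (Ψ : ℕ → EuclideanSpace ℝ (Fin d) → ℝ) (n : ℕ) (x : EuclideanSpace ℝ (Fin d))
    (ε : ℝ) : Set (EuclideanSpace ℝ (Fin d) → ℝ) :=
  {g | ∃ (a : EuclideanSpace ℝ (Fin d)) (b : ℝ),
    (∀ y, g y = Ψ n y + (inner ℝ a y + b)) ∧ (∀ y, 0 ≤ g y) ∧ g x < ε}

/-- `I^b(x)`: the set of `y` such that
`lim_{ε↓0} sup_n sup_{ψ̄_n ∈ [ψ_n]^{x,ε}} ψ̄_n(y) < ∞`.  Since the inner supremum is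
nonincreasing as `ε ↓ 0`, finiteness of the limit is equivalent to finiteness of the
supremum for some `ε > 0`. -/
def Ib (Ψ : ℕ → EuclideanSpace ℝ (Fin d) → ℝ) (x : EuclideanSpace ℝ (Fin d)) :
    Set (EuclideanSpace ℝ (Fin d)) :=
  {y | ∃ ε > (0 : ℝ), ∃ M : ℝ, ∀ n, ∀ g ∈ reps Ψ n x ε, g y ≤ M}

/-- `I^B(x)`: the relative interior of `I^b(x)`. -/
def IB (Ψ : ℕ → EuclideanSpace ℝ (Fin d) → ℝ) (x : EuclideanSpace ℝ (Fin d)) :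
    Set (EuclideanSpace ℝ (Fin d)) :=
  intrinsicInterior ℝ (Ib Ψ x)

/-!
Everything rests on one computation. Let `g = ψ_n + aff` and let `ℓ` be an affine minorant of
`g` that is almost tight at a point `z`, so that `g - ℓ ∈ [ψ_n]^{z,η}`. Along the line through
`p` and `ζ`, the affine `ℓ` is determined by its values at `p` and at the reflection
`p + δ (p - ζ)` of `ζ`; hence if `ζ` and its reflection lie in `I^b(z)`, a bound on `g(p)`
becomes a bound on `g(ζ)`.

With `p = x₁ ∈ ri I^b(x)` and `z = x`, reflections of points of `I^b(x)` through `x₁` stay in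
`I^b(x)`, which gives `I^b(x) ⊆ I^b(x₁)`. With `p = z = x₁`, the converse inclusion needs that
every `x₁` is an algebraic relative-interior point of `I^b(x₁)`: for `y ∈ I^b(x₁)` some point
`x₁ + δ (x₁ - y)` lies in `I^b(x₁)`. This is where Hahn–Banach enters: if `g` were large just
beyond `x₁` on the side opposite to `y`, a supporting affine function of `g` that is steep along
that line would force `g(y) < 0`. The same fact gives `x₁ ∈ ri I^b(x₁)` in finite dimension,
and disjointness follows.
-/

open scoped RealInnerProductSpace

section IntrinsicInterior

variable {F : Type*} [NormedAddCommGroup F] [NormedSpace ℝ F] {A : Set F} {x : F}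

lemma exists_dist_lt_subset_of_mem_intrinsicInterior (hx : x ∈ intrinsicInterior ℝ A) :
    ∃ r > 0, ∀ p ∈ affineSpan ℝ A, dist p x < r → p ∈ A := by
  obtain ⟨⟨x, hxA⟩, hint, rfl⟩ := mem_intrinsicInterior.1 hx
  obtain ⟨r, hr, hball⟩ := Metric.mem_nhds_iff.1 (mem_interior_iff_mem_nhds.1 hint)
  exact ⟨r, hr, fun p hp hpx => hball (show dist (⟨p, hp⟩ : affineSpan ℝ A) ⟨x, hxA⟩ < r from hpx)⟩

lemma mem_intrinsicInterior_of_dist_lt_subset (hx : x ∈ affineSpan ℝ A) {r : ℝ} (hr : 0 < r)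
    (h : ∀ p ∈ affineSpan ℝ A, dist p x < r → p ∈ A) : x ∈ intrinsicInterior ℝ A :=
  mem_intrinsicInterior.2 ⟨⟨x, hx⟩,
    mem_interior_iff_mem_nhds.2 (Metric.mem_nhds_iff.2 ⟨r, hr, fun p hp => h p p.2 hp⟩), rfl⟩

lemma exists_add_smul_sub_mem_of_mem_intrinsicInterior (hx : x ∈ intrinsicInterior ℝ A) {y : F}
    (hy : y ∈ A) : ∃ δ > (0 : ℝ), x + δ • (x - y) ∈ A := by
  obtain ⟨r, hr, hA⟩ := exists_dist_lt_subset_of_mem_intrinsicInterior hx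
  have hxA := subset_affineSpan ℝ A (intrinsicInterior_subset hx)
  have hyA := subset_affineSpan ℝ A hy
  refine ⟨r / (‖x - y‖ + 1), by positivity, hA _ ?_ ?_⟩
  · have := AffineSubspace.smul_vsub_vadd_mem _ (r / (‖x - y‖ + 1)) hxA hyA hxA
    rwa [vsub_eq_sub, vadd_eq_add, add_comm] at this
  · rw [dist_eq_norm, add_sub_cancel_left, norm_smul, Real.norm_of_nonneg (by positivity),
      div_mul_eq_mul_div, div_lt_iff₀ (by positivity)]
    nlinarith

lemma Convex.mem_intrinsicInterior_of_forall_exists_add_smul_sub_mem [FiniteDimensional ℝ F]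
    (hA : Convex ℝ A) (hx : x ∈ A) (h : ∀ y ∈ A, ∃ δ > (0 : ℝ), x + δ • (x - y) ∈ A) :
    x ∈ intrinsicInterior ℝ A := by
  obtain ⟨z, hz⟩ := Set.Nonempty.intrinsicInterior hA ⟨x, hx⟩
  obtain ⟨r, hr, hzA⟩ := exists_dist_lt_subset_of_mem_intrinsicInterior hz
  obtain ⟨δ, hδ, hw⟩ := h z (intrinsicInterior_subset hz)
  have hxS := subset_affineSpan ℝ A hx
  have hzS := subset_affineSpan ℝ A (intrinsicInterior_subset hz)
  refine mem_intrinsicInterior_of_dist_lt_subset hxS (r := δ / (1 + δ) * r) (by positivity)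
    fun p hp hpx => ?_
  -- `p` is a convex combination of a point `p'` near `z` and of `x + δ • (x - z)`.
  set p' := z + ((1 + δ) / δ) • (p - x)
  have hp' : p' ∈ A := by
    refine hzA p' ?_ ?_
    · have := AffineSubspace.smul_vsub_vadd_mem _ ((1 + δ) / δ) hp hxS hzS
      rwa [vsub_eq_sub, vadd_eq_add, add_comm] at this
    · rw [dist_eq_norm, add_sub_cancel_left, norm_smul, Real.norm_of_nonneg (by positivity),
        ← dist_eq_norm]
      calc (1 + δ) / δ * dist p x < (1 + δ) / δ * (δ / (1 + δ) * r) := by gcongr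
        _ = r := by field_simp
  convert hA hp' hw (by positivity : 0 ≤ δ / (1 + δ)) (by positivity : 0 ≤ 1 / (1 + δ))
    (by rw [← add_div, add_comm, div_self (by positivity)]) using 1
  simp only [p', smul_add, smul_sub, smul_smul]
  match_scalars <;> field_simp <;> ring

end IntrinsicInterior

section SupportingAffine

variable {F : Type*} [NormedAddCommGroup F] [NormedSpace ℝ F] {g : F → ℝ} {x u : F} {c₀ c₁ : ℝ}

lemma ConvexOn.exists_separation_of_le_on_line (hg : ConvexOn ℝ univ g) (hgc : Continuous g)
    (hline : ∀ t : ℝ, c₀ + c₁ * t ≤ g (x + t • u)) :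
    ∃ (f : StrongDual ℝ F) (φ σ : ℝ), (∀ w, ∀ s > 0, f w + (g w + s) * φ < σ) ∧
      ∀ t : ℝ, σ ≤ f x + c₀ * φ + t * (f u + c₁ * φ) := by
  let line : ℝ →ᵃ[ℝ] F × ℝ := AffineMap.lineMap (x, c₀) (x + u, c₀ + c₁)
  have hline_apply (t : ℝ) : line t = (x + t • u, c₀ + c₁ * t) := by
    ext <;> simp [line, AffineMap.lineMap_apply_module', add_comm, mul_comm]
  have hopen : IsOpen {p : F × ℝ | p.1 ∈ univ ∧ g p.1 < p.2} := by
    simpa using isOpen_lt (hgc.comp continuous_fst) continuous_snd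
  have hdisj : Disjoint {p : F × ℝ | p.1 ∈ univ ∧ g p.1 < p.2} (line '' univ) := by
    rw [Set.disjoint_left]
    rintro p ⟨-, hp⟩ ⟨t, -, rfl⟩
    rw [hline_apply] at hp
    exact (hline t).not_gt hp
  obtain ⟨ℓ, σ, hS, hT⟩ := geometric_hahn_banach_open hg.convex_strict_epigraph hopen
    (convex_univ.affine_image line) hdisj
  have hℓ (w : F) (r : ℝ) : ℓ (w, r) = ℓ (w, 0) + r * ℓ (0, 1) := by
    rw [← smul_eq_mul, ← map_smul, ← map_add, Prod.smul_mk, Prod.mk_add_mk]; simp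
  refine ⟨ℓ.comp (ContinuousLinearMap.inl ℝ F ℝ), ℓ (0, 1), σ, fun w s hs => ?_, fun t => ?_⟩
  · have := hS (w, g w + s) ⟨mem_univ w, by linarith⟩
    rw [hℓ] at this
    simpa using this
  · have := hT (line t) ⟨t, mem_univ t, rfl⟩
    rw [hline_apply, hℓ] at this
    have hx : ℓ (x + t • u, 0) = ℓ (x, 0) + t * ℓ (u, 0) := by
      rw [← smul_eq_mul, ← map_smul, ← map_add, Prod.smul_mk, Prod.mk_add_mk]; simp
    simp only [ContinuousLinearMap.coe_comp, Function.comp_apply, ContinuousLinearMap.inl_apply]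
    linarith

lemma ConvexOn.exists_le_of_le_on_line (hg : ConvexOn ℝ univ g) (hgc : Continuous g)
    (hline : ∀ t : ℝ, c₀ + c₁ * t ≤ g (x + t • u)) :
    ∃ (f : StrongDual ℝ F) (b : ℝ), (∀ w, f w + b ≤ g w) ∧ c₀ ≤ f x + b ∧ f u = c₁ := by
  obtain ⟨f, φ, σ, hS, hT⟩ := hg.exists_separation_of_le_on_line hgc hline
  have hφ : φ < 0 := by
    have hc₀ : c₀ ≤ g x := by simpa using hline 0
    refine neg_of_mul_neg_right (a := g x + 1 - c₀) ?_ (by linarith)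
    linarith [hS x 1 one_pos, hT 0]
  have hslope : f u + c₁ * φ = 0 := by
    by_contra hk
    have := hT ((σ - (f x + c₀ * φ) - 1) / (f u + c₁ * φ))
    rw [div_mul_cancel₀ _ hk] at this
    linarith
  have hepi (w : F) : f w + g w * φ ≤ σ := by
    refine le_of_forall_pos_lt_add fun ε hε => ?_
    have := hS w (ε / -φ) (div_pos hε (neg_pos.2 hφ))
    rwa [add_mul, div_mul_eq_mul_div, div_neg, mul_div_cancel_right₀ _ hφ.ne, ← add_assoc,
      add_neg_lt_iff_lt_add] at this
  refine ⟨(-φ⁻¹) • f, σ / φ, fun w => ?_, ?_, ?_⟩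
  · have : ((-φ⁻¹) • f) w + σ / φ = (σ - f w) / φ := by rw [smul_apply, smul_eq_mul]; ring
    rw [this, div_le_iff_of_neg hφ]
    linarith [hepi w]
  · have : ((-φ⁻¹) • f) x + σ / φ = (σ - f x) / φ := by rw [smul_apply, smul_eq_mul]; ring
    rw [this, le_div_iff_of_neg hφ]
    linarith [hT 0]
  · have : f u = -(c₁ * φ) := by linarith
    rw [smul_apply, smul_eq_mul, this]
    field_simp [hφ.ne]

end SupportingAffine

section InnerProductSpace

variable {F : Type*} [NormedAddCommGroup F] [InnerProductSpace ℝ F] [FiniteDimensional ℝ F]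
  {g : F → ℝ}

lemma ConvexOn.exists_inner_le_of_le_on_line (hg : ConvexOn ℝ univ g) {x u : F} {c₀ c₁ : ℝ}
    (hline : ∀ t : ℝ, c₀ + c₁ * t ≤ g (x + t • u)) :
    ∃ (a : F) (b : ℝ), (∀ w, ⟪a, w⟫ + b ≤ g w) ∧ c₀ ≤ ⟪a, x⟫ + b ∧ ⟪a, u⟫ = c₁ := by
  obtain ⟨f, b, hle, hx, hu⟩ := hg.exists_le_of_le_on_line hg.locallyLipschitz.continuous hline
  refine ⟨(InnerProductSpace.toDual ℝ F).symm f, b, ?_⟩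
  simp only [InnerProductSpace.toDual_symm_apply]
  exact ⟨hle, hx, hu⟩

lemma ConvexOn.exists_inner_le_sub_lt (hg : ConvexOn ℝ univ g) (x : F) {η : ℝ} (hη : 0 < η) :
    ∃ (a : F) (b : ℝ), (∀ w, ⟪a, w⟫ + b ≤ g w) ∧ g x - (⟪a, x⟫ + b) < η := by
  obtain ⟨a, b, hle, hx, -⟩ := hg.exists_inner_le_of_le_on_line (x := x) (u := 0)
    (c₀ := g x - η / 2) (c₁ := 0) fun t => by rw [zero_mul, add_zero, smul_zero, add_zero]; linarith
  exact ⟨a, b, hle, by linarith⟩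

end InnerProductSpace

lemma ConvexOn.le_on_line_of_le_secant {F : Type*} [AddCommGroup F] [Module ℝ F] {g : F → ℝ}
    (hg : ConvexOn ℝ univ g) (hg₀ : ∀ w, 0 ≤ g w) {x u : F} {δ C κ : ℝ} (hδ : 0 < δ)
    (hC : 0 ≤ C) (hκ : g x + C * δ ≤ κ) (hjump : g x + C * δ ≤ g (x + δ • u)) (t : ℝ) :
    (g x - κ) + C * t ≤ g (x + t • u) := by
  rcases le_or_gt t δ with ht | ht
  · nlinarith [hg₀ (x + t • u), hg₀ x]
  set s := δ / t with hs
  have hs₀ : 0 < s := div_pos hδ (by linarith)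
  have hs₁ : s ≤ 1 := (div_le_one (by linarith)).2 ht.le
  have hconv := hg.2 (mem_univ (x + t • u)) (mem_univ x) hs₀.le (sub_nonneg.2 hs₁)
    (add_sub_cancel s 1)
  have hst : s * t = δ := div_mul_cancel₀ δ (by linarith)
  have hmid : s • (x + t • u) + (1 - s) • x = x + δ • u := by
    rw [smul_add, smul_smul, hst]; module
  rw [hmid, smul_eq_mul, smul_eq_mul] at hconv
  have : 0 ≤ s * (g (x + t • u) - (g x + C * t)) := by nlinarith
  nlinarith [nonneg_of_mul_nonneg_right this hs₀, hg₀ x]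

section Ib

variable {Ψ : ℕ → EuclideanSpace ℝ (Fin d) → ℝ} {n : ℕ} {x y z p ζ : EuclideanSpace ℝ (Fin d)}
  {ε η : ℝ} {g : EuclideanSpace ℝ (Fin d) → ℝ}

lemma reps_mono {ε' : ℝ} (h : ε ≤ ε') : reps Ψ n x ε ⊆ reps Ψ n x ε' :=
  fun _ ⟨a, b, hrep, hnn, hx⟩ => ⟨a, b, hrep, hnn, hx.trans_le h⟩

lemma convexOn_of_mem_reps (hΨ : ConvexOn ℝ univ (Ψ n)) (hg : g ∈ reps Ψ n x ε) :
    ConvexOn ℝ univ g := by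
  obtain ⟨a, b, hrep, -, -⟩ := hg
  rw [show g = fun y => Ψ n y + ⟪a, y⟫ + b from funext fun y => by rw [hrep, add_assoc]]
  exact (hΨ.add ((innerₗ _ a).convexOn convex_univ)).add_const b

lemma sub_inner_mem_reps (hg : g ∈ reps Ψ n y ε) {a : EuclideanSpace ℝ (Fin d)} {b : ℝ}
    (hle : ∀ w, ⟪a, w⟫ + b ≤ g w) (hz : g z - (⟪a, z⟫ + b) < η) :
    (fun w => g w - (⟪a, w⟫ + b)) ∈ reps Ψ n z η := by
  obtain ⟨a₀, b₀, hrep, -, -⟩ := hg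
  refine ⟨a₀ - a, b₀ - b, fun w => ?_, fun w => sub_nonneg.2 (hle w), hz⟩
  dsimp only
  rw [hrep, inner_sub_left]
  ring

lemma mem_Ib_self (Ψ : ℕ → EuclideanSpace ℝ (Fin d) → ℝ) (x : EuclideanSpace ℝ (Fin d)) :
    x ∈ Ib Ψ x :=
  ⟨1, one_pos, 1, fun _ _ ⟨_, _, _, _, hx⟩ => hx.le⟩

lemma exists_reps_bound_of_mem_Ib {y₁ y₂ : EuclideanSpace ℝ (Fin d)} (h₁ : y₁ ∈ Ib Ψ x)
    (h₂ : y₂ ∈ Ib Ψ x) :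
    ∃ ε > (0 : ℝ), ∃ M, ∀ n, ∀ g ∈ reps Ψ n x ε, g y₁ ≤ M ∧ g y₂ ≤ M := by
  obtain ⟨ε₁, hε₁, M₁, hM₁⟩ := h₁
  obtain ⟨ε₂, hε₂, M₂, hM₂⟩ := h₂
  exact ⟨min ε₁ ε₂, lt_min hε₁ hε₂, max M₁ M₂, fun n g hg =>
    ⟨(hM₁ n g (reps_mono (min_le_left _ _) hg)).trans (le_max_left _ _),
      (hM₂ n g (reps_mono (min_le_right _ _) hg)).trans (le_max_right _ _)⟩⟩

lemma convex_Ib (hconv : ∀ n, ConvexOn ℝ univ (Ψ n)) (x : EuclideanSpace ℝ (Fin d)) :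
    Convex ℝ (Ib Ψ x) := by
  intro y₁ h₁ y₂ h₂ s t hs ht hst
  obtain ⟨ε, hε, M, hM⟩ := exists_reps_bound_of_mem_Ib h₁ h₂
  refine ⟨ε, hε, M, fun n g hg => ?_⟩
  calc g (s • y₁ + t • y₂) ≤ s • g y₁ + t • g y₂ :=
        (convexOn_of_mem_reps (hconv n) hg).2 (mem_univ _) (mem_univ _) hs ht hst
    _ ≤ s • M + t • M := by gcongr <;> simp [hM n g hg]
    _ = M := by rw [← add_smul, hst, one_smul]

lemma le_of_mem_reps_of_reflection (hΨ : ConvexOn ℝ univ (Ψ n)) {δ c M : ℝ} (hδ : 0 < δ)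
    (hη : 0 < η) (hM : ∀ h ∈ reps Ψ n z η, h ζ ≤ M ∧ h (p + δ • (p - ζ)) ≤ M)
    (hg : g ∈ reps Ψ n y ε) (hgp : g p ≤ c) : g ζ ≤ M + ((1 + δ) * c + M) / δ := by
  obtain ⟨a, b, hle, hz⟩ := (convexOn_of_mem_reps hΨ hg).exists_inner_le_sub_lt z hη
  obtain ⟨hζ, hq⟩ := hM _ (sub_inner_mem_reps hg hle hz)
  have hg₀ : 0 ≤ g (p + δ • (p - ζ)) := by obtain ⟨_, _, _, hnn, _⟩ := hg; exact hnn _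
  have hline : δ * ⟪a, ζ⟫ = (1 + δ) * ⟪a, p⟫ - ⟪a, p + δ • (p - ζ)⟫ := by
    rw [inner_add_right, inner_smul_right, inner_sub_right]; ring
  have hζ' := mul_le_mul_of_nonneg_left (show g ζ - M ≤ ⟪a, ζ⟫ + b by linarith) hδ.le
  have hp := mul_le_mul_of_nonneg_left ((hle p).trans hgp) (by linarith : (0 : ℝ) ≤ 1 + δ)
  rw [← sub_le_iff_le_add', le_div_iff₀ hδ]
  linarith

lemma mem_Ib_of_mem_Ib_of_reflection (hconv : ∀ n, ConvexOn ℝ univ (Ψ n)) {δ : ℝ} (hδ : 0 < δ)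
    (hζ : ζ ∈ Ib Ψ x) (hq : p + δ • (p - ζ) ∈ Ib Ψ x) : ζ ∈ Ib Ψ p := by
  obtain ⟨η, hη, M, hM⟩ := exists_reps_bound_of_mem_Ib hζ hq
  refine ⟨1, one_pos, M + ((1 + δ) * 1 + M) / δ, fun n g hg => ?_⟩
  obtain ⟨-, -, -, -, hgp⟩ := id hg
  exact le_of_mem_reps_of_reflection (hconv n) hδ hη (hM n) hg hgp.le

lemma mem_Ib_trans_of_reflection (hconv : ∀ n, ConvexOn ℝ univ (Ψ n)) {δ : ℝ} (hδ : 0 < δ)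
    (hp : p ∈ Ib Ψ x) (hζ : ζ ∈ Ib Ψ p) (hq : p + δ • (p - ζ) ∈ Ib Ψ p) : ζ ∈ Ib Ψ x := by
  obtain ⟨ε, hε, Mp, hMp⟩ := hp
  obtain ⟨η, hη, M, hM⟩ := exists_reps_bound_of_mem_Ib hζ hq
  exact ⟨ε, hε, M + ((1 + δ) * Mp + M) / δ, fun n g hg =>
    le_of_mem_reps_of_reflection (hconv n) hδ hη (hM n) hg (hMp n g hg)⟩

lemma exists_add_smul_sub_mem_Ib (hconv : ∀ n, ConvexOn ℝ univ (Ψ n)) (hy : y ∈ Ib Ψ x) :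
    ∃ δ > (0 : ℝ), x + δ • (x - y) ∈ Ib Ψ x := by
  obtain ⟨ε, hε, M, hM⟩ := hy
  set C := max M 0 + ε
  have hC : 0 < C := by positivity
  refine ⟨ε / (4 * C), by positivity, ε / 4, by positivity, ε, fun n g hg => ?_⟩
  by_contra! hbig
  have hgc := convexOn_of_mem_reps (hconv n) hg
  obtain ⟨-, -, -, hg₀, hgx⟩ := id hg
  have hCδ : C * (ε / (4 * C)) = ε / 4 := by field_simp
  obtain ⟨a, b, hle, hx, hu⟩ := hgc.exists_inner_le_of_le_on_line
    (hgc.le_on_line_of_le_secant hg₀ (x := x) (u := x - y) (δ := ε / (4 * C)) (κ := ε / 2)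
      (by positivity) hC.le (by linarith) (by linarith))
  have hy : g y - (⟪a, y⟫ + b) ≤ M := hM n _ (sub_inner_mem_reps hg hle (by linarith))
  have : ⟪a, y⟫ = ⟪a, x⟫ - C := by rw [← hu, ← inner_sub_right, sub_sub_cancel]
  linarith [hg₀ y, hle x, le_max_left M 0]

end Ib

theorem IB_paving_general (Ψ : ℕ → EuclideanSpace ℝ (Fin d) → ℝ)
    (hconv : ∀ n, ConvexOn ℝ Set.univ (Ψ n)) :
    (∀ x x₁, x₁ ∈ IB Ψ x → IB Ψ x = IB Ψ x₁) ∧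
    (∀ x x₁, x₁ ∉ IB Ψ x → IB Ψ x ∩ IB Ψ x₁ = ∅) := by
  have hIb : ∀ x x₁, x₁ ∈ IB Ψ x → Ib Ψ x = Ib Ψ x₁ := fun x x₁ hx₁ => by
    refine Subset.antisymm (fun ζ hζ => ?_) (fun ζ hζ => ?_)
    · obtain ⟨δ, hδ, hq⟩ := exists_add_smul_sub_mem_of_mem_intrinsicInterior hx₁ hζ
      exact mem_Ib_of_mem_Ib_of_reflection hconv hδ hζ hq
    · obtain ⟨δ, hδ, hq⟩ := exists_add_smul_sub_mem_Ib hconv hζ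
      exact mem_Ib_trans_of_reflection hconv hδ (intrinsicInterior_subset hx₁) hζ hq
  have hIB : ∀ x x₁, x₁ ∈ IB Ψ x → IB Ψ x = IB Ψ x₁ := fun x x₁ hx₁ => by
    rw [IB, IB, hIb x x₁ hx₁]
  have hself : ∀ x, x ∈ IB Ψ x := fun x =>
    (convex_Ib hconv x).mem_intrinsicInterior_of_forall_exists_add_smul_sub_mem
      (mem_Ib_self Ψ x) fun _ hy => exists_add_smul_sub_mem_Ib hconv hy
  refine ⟨hIB, fun x x₁ hx₁ => eq_empty_iff_forall_notMem.2 fun w ⟨hw, hw₁⟩ => hx₁ ?_⟩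
  rw [hIB x w hw, ← hIB x₁ w hw₁]
  exact hself x₁

/-- The Bass paving: for a sequence of nonnegative convex functions `ψ_n`,
if `x₁ ∈ I^B(x)` then `I^B(x) = I^B(x₁)`, and for `x₁ ∉ I^B(x)` the sets `I^B(x)` and
`I^B(x₁)` are disjoint; hence `{I^B(x)}` is a paving of `ℝ^d` into disjoint relatively
open convex sets. -/
theorem IB_paving (Ψ : ℕ → EuclideanSpace ℝ (Fin d) → ℝ)
    (hconv : ∀ n, ConvexOn ℝ Set.univ (Ψ n)) (hpos : ∀ n y, 0 ≤ Ψ n y) :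
    (∀ x x₁, x₁ ∈ IB Ψ x → IB Ψ x = IB Ψ x₁) ∧
    (∀ x x₁, x₁ ∉ IB Ψ x → IB Ψ x ∩ IB Ψ x₁ = ∅) :=
  IB_paving_general Ψ hconv
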